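/- arXiv:2405.16639 — 3 statements merged into one kernel-verified Lean document; each statement's English description precedes it below -/
import Mathlib

section
/- Let Ω ⊆ ℝ^K be compact convex with ℓ∞-diameter at most d_Ω, φ: Ω → ℝ strictly convex and continuously differentiable with each coordinate (∇φ)_ℓ being L_g-Lipschitz on the relevant range, and D a distribution on Δ × Ω whose marginal D_X on ℝ^d satisfies c-isoperimetry. Fix an L-Lipschitz measurable f: Δ → Ω, let (X_i, Y_i)_{i=1}^n be i.i.d. samples from D, and set Γ₃^{(i)}(f) := −⟨Y_i − E[Y_i|X_i], ∇φ(f(X_i)) − E[∇φ(f(X))]⟩. Then for every ε > 0, Pr[(1/n)Σ_{i=1}^n Γ₃^{(i)}(f) ≤ −ε] ≤ K·exp(−ndε² / (2cC²K²d_Ω²L²L_g²)), where C is the universal constant such that a product of a bounded uncorrelated factor |Z| ≤ M with a mean-zero σ-sub-Gaussian variable is CMσ-sub-Gaussian. -/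
/-!
Coordinatewise, the `ℓ`-th part of `⟪Y - η X, ∇φ (f X) - E ∇φ (f X)⟫` is the residual
`(Y - E[Y | X])_ℓ`, bounded by `d_Ω`, times the centered feature `g_ℓ X - E g_ℓ X` with
`g_ℓ = (∇φ ∘ f)_ℓ` Lipschitz with constant `|L| |L_g|`. Isoperimetry makes the feature
sub-Gaussian with parameter `|L| |L_g| √(c/d)`; the residual has zero conditional mean given `X`,
so the two factors are uncorrelated and the product is `C d_Ω |L| |L_g| √(c/d)`-sub-Gaussian.
Hoeffding's bound for the mean of `n` i.i.d. copies controls each coordinate at level `ε / K`,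
and a union bound over the `K` coordinates gives the factor `K`.
-/

open MeasureTheory ProbabilityTheory Real
open scoped ENNReal RealInnerProductSpace

noncomputable section

/-- `ℝ^m` with the Euclidean structure. -/
abbrev Euc (m : ℕ) : Type := EuclideanSpace ℝ (Fin m)

/-- The Bregman divergence `D_φ(x, y) = φ x - φ y - ⟪∇φ y, x - y⟫`. -/
def breg {m : ℕ} (φ : Euc m → ℝ) (x y : Euc m) : ℝ :=
  φ x - φ y - ⟪gradient φ y, x - y⟫

/-- A real random variable `X` is sub-Gaussian with parameter `σ` under `μ`:
`E[exp (l (X - E X))] ≤ exp (l² σ² / 2)` for all real `l`. -/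
def SubGaussianPar {α : Type*} [MeasurableSpace α] (μ : Measure α) (X : α → ℝ) (σ : ℝ) : Prop :=
  ∀ l : ℝ, ∫ a, Real.exp (l * (X a - ∫ a', X a' ∂μ)) ∂μ ≤ Real.exp (l ^ 2 * σ ^ 2 / 2)

/-- A distribution on `ℝ^d` satisfies `c`-isoperimetry: every `L`-Lipschitz real-valued
function of the sample is sub-Gaussian with parameter `L √(c/d)`. -/
def Isoperimetric (c : ℝ) (d : ℕ) (μ : Measure (Euc d)) : Prop :=
  ∀ (L : ℝ) (f : Euc d → ℝ), 0 ≤ L → LipschitzWith (Real.toNNReal L) f →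
    SubGaussianPar μ f (L * Real.sqrt (c / d))

/-- `C` is a universal constant such that the product of a bounded uncorrelated factor
`|Z| ≤ M` with a mean-zero `σ`-sub-Gaussian variable is `C·M·σ`-sub-Gaussian. -/
def MultConstGood (C : ℝ) : Prop :=
  0 < C ∧ ∀ (α : Type) [MeasurableSpace α] (μ : Measure α), IsProbabilityMeasure μ →
    ∀ (X Z : α → ℝ) (σ M : ℝ), Measurable X → Measurable Z →
      SubGaussianPar μ X σ → (∫ a, X a ∂μ) = 0 → (∫ a, Z a * X a ∂μ) = 0 →
      (∀ᵐ a ∂μ, |Z a| ≤ M) → SubGaussianPar μ (fun a => Z a * X a) (C * M * σ)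

open scoped NNReal

section SubGaussian

variable {α : Type*} [MeasurableSpace α] {μ : Measure α}

lemma SubGaussianPar.of_map {β : Type*} [MeasurableSpace β] {F : α → β} {h : β → ℝ}
    {σ : ℝ} (hF : Measurable F) (hh : Measurable h) (hs : SubGaussianPar (μ.map F) h σ) :
    SubGaussianPar μ (fun a => h (F a)) σ := by
  intro l
  have h_l := hs l
  rwa [integral_map hF.aemeasurable hh.aestronglyMeasurable,
    integral_map hF.aemeasurable (by fun_prop)] at h_l

lemma SubGaussianPar.hasSubgaussianMGF [IsFiniteMeasure μ] {X : α → ℝ} {σ B : ℝ}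
    (h : SubGaussianPar μ X σ) (hX : AEMeasurable X μ) (hB : ∀ᵐ a ∂μ, |X a| ≤ B)
    (hmean : ∫ a, X a ∂μ = 0) :
    HasSubgaussianMGF X ⟨σ ^ 2, sq_nonneg σ⟩ μ where
  integrable_exp_mul t :=
    integrable_exp_mul_of_mem_Icc (a := -B) (b := B) hX (hB.mono fun _ => abs_le.mp)
  mgf_le t := calc
    mgf X μ t = ∫ a, exp (t * (X a - ∫ a', X a' ∂μ)) ∂μ := by simp [mgf, hmean]
    _ ≤ exp (t ^ 2 * σ ^ 2 / 2) := h t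
    _ = exp (σ ^ 2 * t ^ 2 / 2) := by ring_nf

lemma measure_pi_mean_ge_le [IsProbabilityMeasure μ] {W : α → ℝ} {c : ℝ≥0}
    (hW : HasSubgaussianMGF W c μ) (n : ℕ) {s : ℝ} (hs : 0 ≤ s) :
    (Measure.pi fun _ : Fin n => μ) {ω | s ≤ (1 / (n : ℝ)) * ∑ i, W (ω i)} ≤
      ENNReal.ofReal (exp (-(n * s ^ 2) / (2 * c))) := by
  rcases n.eq_zero_or_pos with rfl | hn
  · simpa using prob_le_one
  have hsum : HasSubgaussianMGF (fun ω : Fin n → α => ∑ i, W (ω i)) (∑ _i : Fin n, c)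
      (Measure.pi fun _ => μ) :=
    HasSubgaussianMGF.sum_of_iIndepFun (iIndepFun_pi fun _ => hW.aemeasurable) fun i _ =>
      ((measurePreserving_eval (fun _ => μ) i).map_eq ▸ hW).of_map
        (measurable_pi_apply i).aemeasurable
  have hevent : {ω : Fin n → α | s ≤ (1 / (n : ℝ)) * ∑ i, W (ω i)} =
      {ω | n * s ≤ ∑ i, W (ω i)} := by
    ext ω
    simp only [Set.mem_ofPred_eq, one_div, ← div_eq_inv_mul,
      le_div_iff₀' (by positivity : (0 : ℝ) < n)]
  rw [hevent, ← ofReal_measureReal]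
  refine ENNReal.ofReal_le_ofReal ((hsum.measure_ge_le (by positivity)).trans_eq ?_)
  congr 1
  simp only [Finset.sum_const, Finset.card_univ, Fintype.card_fin, nsmul_eq_mul, NNReal.coe_mul,
    NNReal.coe_natCast]
  field_simp

end SubGaussian

lemma exists_div_card_le_of_le_sum {ι : Type*} [Fintype ι] {a : ι → ℝ} {t : ℝ} (ht : 0 < t)
    (hsum : t ≤ ∑ i, a i) : ∃ i, t / Fintype.card ι ≤ a i := by
  have hne : (Finset.univ : Finset ι).Nonempty := by
    by_contra h
    rw [Finset.not_nonempty_iff_eq_empty.mp h, Finset.sum_empty] at hsum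
    linarith
  have hcard : (0 : ℝ) < Fintype.card ι := by exact_mod_cast Fintype.card_pos_iff.mpr hne.to_type
  have hconst : ∑ _i : ι, t / Fintype.card ι = t := by
    rw [Finset.sum_const, Finset.card_univ, nsmul_eq_mul, mul_div_cancel₀ _ hcard.ne']
  obtain ⟨i, -, hi⟩ := Finset.exists_le_of_sum_le hne (hconst.trans_le hsum)
  exact ⟨i, hi⟩

lemma setOf_mean_neg_inner_le_subset_iUnion {α : Type*} {K n : ℕ} (U V : α → Euc K) {ε : ℝ}
    (hε : 0 < ε) :
    {ω : Fin n → α | (1 / (n : ℝ)) * ∑ i, -⟪U (ω i), V (ω i)⟫ ≤ -ε} ⊆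
      ⋃ ℓ, {ω | ε / K ≤ (1 / (n : ℝ)) * ∑ i, U (ω i) ℓ * V (ω i) ℓ} := by
  intro ω hω
  have hsum : ε ≤ ∑ ℓ, (1 / (n : ℝ)) * ∑ i, U (ω i) ℓ * V (ω i) ℓ := by
    simp only [Set.mem_ofPred_eq, Finset.sum_neg_distrib, mul_neg, neg_le_neg_iff, PiLp.inner_apply,
      RCLike.inner_apply, conj_trivial, mul_comm (V _ _)] at hω
    rwa [Finset.sum_comm, Finset.mul_sum] at hω
  obtain ⟨ℓ, hℓ⟩ := exists_div_card_le_of_le_sum hε hsum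
  exact Set.mem_iUnion.2 ⟨ℓ, by simpa using hℓ⟩

lemma measure_pi_mean_neg_inner_le_le {α : Type*} [MeasurableSpace α] {μ : Measure α}
    [IsProbabilityMeasure μ] {K : ℕ} (U V : α → Euc K) {c : ℝ≥0}
    (hUV : ∀ ℓ, HasSubgaussianMGF (fun a => U a ℓ * V a ℓ) c μ) (n : ℕ) {ε : ℝ} (hε : 0 < ε) :
    (Measure.pi fun _ : Fin n => μ) {ω | (1 / (n : ℝ)) * ∑ i, -⟪U (ω i), V (ω i)⟫ ≤ -ε} ≤
      ENNReal.ofReal (K * exp (-(n * (ε / K) ^ 2) / (2 * c))) := calc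
  _ ≤ _ := (measure_mono (setOf_mean_neg_inner_le_subset_iUnion U V hε)).trans
    (measure_iUnion_fintype_le _ _)
  _ ≤ ∑ _ℓ : Fin K, ENNReal.ofReal (exp (-(n * (ε / K) ^ 2) / (2 * c))) :=
    Finset.sum_le_sum fun ℓ _ => measure_pi_mean_ge_le (hUV ℓ) n (by positivity)
  _ = _ := by simp [ENNReal.ofReal_mul]

lemma Isoperimetric.subGaussianPar_comp_fst {c : ℝ} {d : ℕ} {β : Type*} [MeasurableSpace β]
    {D : Measure (Euc d × β)} (hiso : Isoperimetric c d (D.map Prod.fst)) {L : ℝ} (hL : 0 ≤ L)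
    {g : Euc d → ℝ} (hg : LipschitzWith (Real.toNNReal L) g) :
    SubGaussianPar D (fun q => g q.1) (L * √(c / d)) :=
  (hiso L g hL hg).of_map measurable_fst hg.continuous.measurable

lemma integral_sub_condExp_mul_eq_zero {α : Type*} {m m₀ : MeasurableSpace α} {μ : Measure α}
    [IsFiniteMeasure μ] (hm : m ≤ m₀) {Y g : α → ℝ} (hY : Integrable Y μ)
    (hg : StronglyMeasurable[m] g) {B : ℝ} (hgB : ∀ a, |g a| ≤ B) :
    ∫ a, (Y a - μ[Y | m] a) * g a ∂μ = 0 := by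
  have hgB' : ∀ᵐ a ∂μ, ‖g a‖ ≤ B := ae_of_all _ hgB
  have hgY : Integrable (fun a => g a * Y a) μ :=
    hY.bdd_mul (hg.mono hm).aestronglyMeasurable hgB'
  have hgE : Integrable (fun a => g a * μ[Y | m] a) μ :=
    integrable_condExp.bdd_mul (hg.mono hm).aestronglyMeasurable hgB'
  have hpull : ∫ a, g a * Y a ∂μ = ∫ a, g a * μ[Y | m] a ∂μ := calc
    ∫ a, g a * Y a ∂μ = ∫ a, μ[g * Y | m] a ∂μ := (integral_condExp hm).symm
    _ = ∫ a, g a * μ[Y | m] a ∂μ :=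
      integral_congr_ae (condExp_mul_of_stronglyMeasurable_left hg hgY hY)
  simp_rw [sub_mul, mul_comm _ (g _)]
  rw [integral_sub hgY hgE, hpull, sub_self]

lemma hasSubgaussianMGF_residual_mul_centered {d : ℕ} {E : Type} [NormedAddCommGroup E]
    [NormedSpace ℝ E] [CompleteSpace E] [MeasurableSpace E] [BorelSpace E]
    {D : Measure (Euc d × E)} [IsProbabilityMeasure D] {c C L M B : ℝ}
    (hiso : Isoperimetric c d (D.map Prod.fst)) (hC : MultConstGood C)
    {η : Euc d → E} (hη : Measurable η)
    (hver : (fun q : Euc d × E => η q.1) =ᵐ[D]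
      D[(fun q : Euc d × E => q.2) | MeasurableSpace.comap Prod.fst inferInstance])
    (hY : Integrable (fun q : Euc d × E => q.2) D)
    (T : E →L[ℝ] ℝ) (hTM : ∀ᵐ q ∂D, |T (q.2 - η q.1)| ≤ M)
    {g : Euc d → ℝ} (hL : 0 ≤ L) (hg : LipschitzWith (Real.toNNReal L) g)
    (hgB : ∀ x, |g x| ≤ B) :
    HasSubgaussianMGF (fun q => T (q.2 - η q.1) * (g q.1 - ∫ q', g q'.1 ∂D))
      ⟨(C * M * (L * √(c / d))) ^ 2, sq_nonneg _⟩ D := by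
  set g₀ : Euc d → ℝ := fun x => g x - ∫ q', g q'.1 ∂D
  have hgm : Measurable g := hg.continuous.measurable
  have hg₀ : LipschitzWith (Real.toNNReal L) g₀ := .of_dist_le_mul fun x y => by
    simpa [g₀, dist_sub_right] using hg.dist_le_mul x y
  have hg₀m : Measurable fun q : Euc d × E => g₀ q.1 :=
    hg₀.continuous.measurable.comp measurable_fst
  have hg₀B : ∀ x, |g₀ x| ≤ B + |∫ q', g q'.1 ∂D| := fun x =>
    (abs_sub _ _).trans (by gcongr; exact hgB x)
  have hg₀_mean : ∫ q, g₀ q.1 ∂D = 0 := by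
    have hint : Integrable (fun q : Euc d × E => g q.1) D :=
      .of_bound (hgm.comp measurable_fst).aestronglyMeasurable B (ae_of_all _ fun q => hgB q.1)
    simp [g₀, integral_sub hint (integrable_const _)]
  have hZ : Measurable fun q : Euc d × E => T (q.2 - η q.1) := by
    simp_rw [map_sub]
    exact (T.continuous.measurable.comp measurable_snd).sub
      (T.continuous.measurable.comp (hη.comp measurable_fst))
  have hTver : (fun q => T (η q.1)) =ᵐ[D]
      D[fun q => T q.2 | MeasurableSpace.comap Prod.fst inferInstance] :=
    (hver.fun_comp T).trans (T.comp_condExp_comm hY)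
  have huncor : ∫ q, T (q.2 - η q.1) * g₀ q.1 ∂D = 0 := by
    rw [← integral_sub_condExp_mul_eq_zero measurable_fst.comap_le (T.integrable_comp hY)
      ((hg₀.continuous.measurable.comp (comap_measurable _)).stronglyMeasurable)
      (fun q => hg₀B q.1)]
    refine integral_congr_ae ?_
    filter_upwards [hTver] with q hq
    simp [map_sub, hq]
  refine (hC.2 _ D inferInstance _ _ _ M hg₀m hZ (hiso.subGaussianPar_comp_fst hL hg₀) hg₀_mean
    huncor hTM).hasSubgaussianMGF (B := M * (B + |∫ q', g q'.1 ∂D|)) (hZ.mul hg₀m).aemeasurable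
    ?_ huncor
  filter_upwards [hTM] with q hq
  rw [abs_mul]
  exact mul_le_mul hq (hg₀B q.1) (abs_nonneg _) ((abs_nonneg _).trans hq)

lemma LipschitzWith.comp_of_lipschitzOnWith_range {α β : Type*} [PseudoEMetricSpace α]
    [PseudoEMetricSpace β] {f : α → β} {g : β → ℝ} {L Lg : ℝ}
    (hf : LipschitzWith (Real.toNNReal L) f)
    (hg : LipschitzOnWith (Real.toNNReal Lg) g (Set.range f)) :
    LipschitzWith (Real.toNNReal (|L| * |Lg|)) (g ∘ f) := by
  rw [← lipschitzOnWith_univ]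
  refine (hg.comp hf.lipschitzOnWith fun x _ => Set.mem_range_self x).weaken ?_
  rw [Real.toNNReal_mul (abs_nonneg L), mul_comm]
  gcongr <;> exact le_abs_self _

lemma ContDiff.continuous_gradient {F : Type*} [NormedAddCommGroup F] [InnerProductSpace ℝ F]
    [CompleteSpace F] {φ : F → ℝ} (hφ : ContDiff ℝ 1 φ) : Continuous (gradient φ) :=
  (InnerProductSpace.toDual ℝ F).symm.continuous.comp (hφ.continuous_fderiv one_ne_zero)

theorem Gamma3_concentration_general (d K : ℕ) (Δ : Set (Euc d)) (Ω : Set (Euc K))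
    (hΩc : IsCompact Ω)
    (dΩ : ℝ) (hdΩ : ∀ x ∈ Ω, ∀ y ∈ Ω, ∀ ℓ : Fin K, |x ℓ - y ℓ| ≤ dΩ)
    (φ : Euc K → ℝ) (hφd : ContDiff ℝ 1 φ)
    (D : Measure (Euc d × Euc K)) [IsProbabilityMeasure D]
    (hsupp : ∀ᵐ q ∂D, q.1 ∈ Δ ∧ q.2 ∈ Ω)
    (c : ℝ) (hc : 0 < c) (hiso : Isoperimetric c d (D.map Prod.fst))
    (η : Euc d → Euc K) (hη : Measurable η) (hηΩ : ∀ x, η x ∈ Ω)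
    (hver : (fun q : Euc d × Euc K => η q.1) =ᵐ[D]
      D[(fun q : Euc d × Euc K => q.2) | MeasurableSpace.comap Prod.fst inferInstance])
    (C : ℝ) (hC : MultConstGood C)
    (L Lg : ℝ)
    (f : Euc d → Euc K) (hfΩ : ∀ x, f x ∈ Ω)
    (hflip : LipschitzWith (Real.toNNReal L) f)
    (hLg : ∀ ℓ : Fin K, LipschitzOnWith (Real.toNNReal Lg)
      (fun y => gradient φ y ℓ) (Set.range f))
    (n : ℕ) (ε : ℝ) (hε : 0 < ε) :
    (Measure.pi fun _ : Fin n => D)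
        {ω | (1 / (n : ℝ)) * ∑ i,
            -⟪(ω i).2 - η ((ω i).1),
              gradient φ (f ((ω i).1)) - ∫ q, gradient φ (f q.1) ∂D⟫ ≤ -ε} ≤
      ENNReal.ofReal (K * Real.exp
        (-(n * d * ε ^ 2) / (2 * c * C ^ 2 * K ^ 2 * dΩ ^ 2 * L ^ 2 * Lg ^ 2))) := by
  set G : Euc d → Euc K := fun x => gradient φ (f x)
  set σ := C * dΩ * (|L| * |Lg| * √(c / d))
  obtain ⟨B, hB⟩ := hΩc.exists_bound_of_continuousOn hφd.continuous_gradient.continuousOn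
  obtain ⟨R, hR⟩ := hΩc.exists_bound_of_continuousOn continuous_id.continuousOn
  have hY : Integrable (fun q : Euc d × Euc K => q.2) D :=
    .of_bound measurable_snd.aestronglyMeasurable R (hsupp.mono fun q hq => hR _ hq.2)
  have hG : Integrable (fun q : Euc d × Euc K => G q.1) D :=
    .of_bound ((hφd.continuous_gradient.comp hflip.continuous).measurable.comp
      measurable_fst).aestronglyMeasurable B (ae_of_all _ fun q => hB _ (hfΩ q.1))
  have hmean : ∀ ℓ, (∫ q, G q.1 ∂D) ℓ = ∫ q, G q.1 ℓ ∂D := fun ℓ =>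
    ((EuclideanSpace.proj ℓ).integral_comp_comm hG).symm
  have hW : ∀ ℓ, HasSubgaussianMGF (fun q => (q.2 - η q.1) ℓ * (G q.1 - ∫ q', G q'.1 ∂D) ℓ)
      ⟨σ ^ 2, sq_nonneg σ⟩ D := fun ℓ =>
    (hasSubgaussianMGF_residual_mul_centered hiso hC hη hver hY (EuclideanSpace.proj ℓ)
      (hsupp.mono fun q hq => hdΩ _ hq.2 _ (hηΩ q.1) ℓ) (by positivity)
      (hflip.comp_of_lipschitzOnWith_range (hLg ℓ))
      (fun x => (PiLp.norm_apply_le (G x) ℓ).trans (hB _ (hfΩ x)))).congr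
      (ae_of_all _ fun q => by simp [G, hmean])
  have hexp : -(n * (ε / K) ^ 2) / (2 * σ ^ 2) =
      -(n * d * ε ^ 2) / (2 * c * C ^ 2 * K ^ 2 * dΩ ^ 2 * L ^ 2 * Lg ^ 2) := by
    simp only [σ, mul_pow, sq_abs, Real.sq_sqrt (by positivity : 0 ≤ c / d)]
    -- no nonvanishing hypotheses are needed: with `(a * b)⁻¹ = a⁻¹ * b⁻¹` this is a ring identity
    simp only [div_eq_mul_inv, mul_inv, inv_inv]
    ring
  exact (measure_pi_mean_neg_inner_le_le _ _ hW n hε).trans_eq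
    (congrArg (fun x => ENNReal.ofReal (K * exp x)) hexp)

/-- **Concentration of the `Γ₃` terms for a fixed Lipschitz `f`** under a `c`-isoperimetric
covariate distribution: the empirical average of
`Γ₃⁽ⁱ⁾(f) = −⟨Yᵢ − E[Yᵢ|Xᵢ], ∇φ(f(Xᵢ)) − E[∇φ(f(X))]⟩` is at least `−ε` except with
probability `K exp(−ndε²/(2cC²K²d_Ω²L²L_g²))`. -/
theorem Gamma3_concentration (d K : ℕ) (Δ : Set (Euc d)) (Ω : Set (Euc K))
    (hΩconv : Convex ℝ Ω) (hΩc : IsCompact Ω)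
    (dΩ : ℝ) (hdΩ : ∀ x ∈ Ω, ∀ y ∈ Ω, ∀ ℓ : Fin K, |x ℓ - y ℓ| ≤ dΩ)
    (φ : Euc K → ℝ) (hφ : StrictConvexOn ℝ Ω φ) (hφd : ContDiff ℝ 1 φ)
    (D : Measure (Euc d × Euc K)) [IsProbabilityMeasure D]
    (hsupp : ∀ᵐ q ∂D, q.1 ∈ Δ ∧ q.2 ∈ Ω)
    (c : ℝ) (hc : 0 < c) (hiso : Isoperimetric c d (D.map Prod.fst))
    (η : Euc d → Euc K) (hη : Measurable η) (hηΩ : ∀ x, η x ∈ Ω)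
    (hver : (fun q : Euc d × Euc K => η q.1) =ᵐ[D]
      D[(fun q : Euc d × Euc K => q.2) | MeasurableSpace.comap Prod.fst inferInstance])
    (C : ℝ) (hC : MultConstGood C)
    (L Lg : ℝ) (hL : 0 ≤ L)
    (f : Euc d → Euc K) (hf : Measurable f) (hfΩ : ∀ x, f x ∈ Ω)
    (hflip : LipschitzWith (Real.toNNReal L) f)
    (hLg : ∀ ℓ : Fin K, LipschitzOnWith (Real.toNNReal Lg)
      (fun y => gradient φ y ℓ) (Set.range f))
    (n : ℕ) (ε : ℝ) (hε : 0 < ε) :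
    (Measure.pi fun _ : Fin n => D)
        {ω | (1 / (n : ℝ)) * ∑ i,
            -⟪(ω i).2 - η ((ω i).1),
              gradient φ (f ((ω i).1)) - ∫ q, gradient φ (f q.1) ∂D⟫ ≤ -ε} ≤
      ENNReal.ofReal (K * Real.exp
        (-(n * d * ε ^ 2) / (2 * c * C ^ 2 * K ^ 2 * dΩ ^ 2 * L ^ 2 * Lg ^ 2))) :=
  Gamma3_concentration_general d K Δ Ω hΩc dΩ hdΩ φ hφd D hsupp c hc hiso η hη hηΩ hver C hC L Lg f
    hfΩ hflip hLg n ε hε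
end
end

section
/- Let Ω ⊆ ℝ^K be compact convex with ℓ∞-diameter at most d_Ω, φ: Ω → ℝ strictly convex and continuously differentiable with each coordinate (∇φ)_ℓ being L_g-Lipschitz on the relevant range. Let (G_i, X_i, Y_i)_{i=1}^n be i.i.d., where G_i ∈ [r] is the mixture label, the conditional law of X_i given G_i = k satisfies c-isoperimetry for each k, and Y_i is conditionally independent of G_i given X_i. Fix an L-Lipschitz measurable f: ℝ^d → Ω and ℓ ∈ [K], and define T_{i,ℓ} := −(Y_{i,ℓ} − E[Y_{i,ℓ}|X_i]) and V̂(f)_{i,ℓ} := ∇φ(f(X_i))_ℓ − E[∇φ(f(X_i))_ℓ | G_i]. Then for every ε > 0, Pr[(1/n)Σ_{i=1}^n T_{i,ℓ}·V̂(f)_{i,ℓ} ≤ −ε] ≤ exp(−ndε² / (2cC²d_Ω²L²L_g²)), where C is the universal constant such that a product of a bounded uncorrelated factor |Z| ≤ M with a mean-zero σ-sub-Gaussian variable is CMσ-sub-Gaussian. -/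
open MeasureTheory ProbabilityTheory Real
open scoped ENNReal RealInnerProductSpace

noncomputable section

/-!
Within the class `G = j`, the centred feature `∇φ(f X)_ℓ - E[∇φ(f X)_ℓ | G = j]` is an
`L_g L`-Lipschitz function of `X`, hence sub-Gaussian with parameter `L_g L √(c/d)` by
isoperimetry, while the residual `T = E[Y_ℓ | X] - Y_ℓ` is bounded by `d_Ω` because `Y` lives
in `Ω`. Since `G` and `Y` are conditionally independent given `X`, `T` stays orthogonal to every
bounded function of `X` even after restricting to `G = j`; so `T` and the centred feature are
uncorrelated under `P[· | G = j]` and the multiplication constant `C` makes their product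
sub-Gaussian with variance proxy `c C² d_Ω² L² L_g² / d` in every class, hence under `P`.
Hoeffding's inequality for the `n` independent copies finishes the proof.
-/

open scoped NNReal

section ConditionalExpectation

variable {α β : Type*} {m mα : MeasurableSpace α} {hm : m ≤ mα}
  [MeasurableSpace β] {P : Measure α}

theorem setIntegral_mul_condExp_of_bound [IsFiniteMeasure P] (hm : m ≤ mα) {B : Set α}
    (hB : MeasurableSet[m] B) {g f : α → ℝ} (hg : StronglyMeasurable[m] g) {R : ℝ}
    (hgR : ∀ᵐ a ∂P, ‖g a‖ ≤ R) (hf : Integrable f P) :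
    ∫ a in B, g a * f a ∂P = ∫ a in B, g a * P[f|m] a ∂P := by
  rw [← setIntegral_condExp hm (hf.bdd_mul (hg.mono hm).aestronglyMeasurable hgR) hB]
  exact setIntegral_congr_ae (hm B hB)
    ((condExp_stronglyMeasurable_mul_of_bound hm hg hf R hgR).mono fun a ha _ => ha)

theorem norm_condExp_indicator_le_one (s : Set α) : ∀ᵐ a ∂P, ‖(P⟦s | m⟧) a‖ ≤ 1 :=
  ae_bdd_norm_condExp_of_ae_bdd_norm (ae_of_all _ fun a => by by_cases ha : a ∈ s <;> simp [ha])

theorem ae_abs_condExp_sub_le [IsFiniteMeasure P] (hm : m ≤ mα) {Y : α → ℝ}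
    (hYi : Integrable Y P) {I D : ℝ} (hY : ∀ᵐ a ∂P, Y a ∈ Set.Icc I (I + D)) :
    ∀ᵐ a ∂P, |P[Y|m] a - Y a| ≤ D := by
  have hlo := condExp_mono (m := m) (integrable_const I) hYi (hY.mono fun a ha => ha.1)
  have hhi := condExp_mono (m := m) hYi (integrable_const (I + D)) (hY.mono fun a ha => ha.2)
  rw [condExp_const hm] at hlo hhi
  filter_upwards [hY, hlo, hhi] with a ha hl hh
  rw [abs_le]
  constructor <;> linarith [ha.1, ha.2, show I ≤ P[Y|m] a from hl, show P[Y|m] a ≤ I + D from hh]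

theorem map_restrict_inter_preimage_eq_map_withDensity [StandardBorelSpace α] [IsFiniteMeasure P]
    {γ : Type*} [MeasurableSpace γ] {G : α → β} {Y : α → γ} (hG : Measurable G) (hY : Measurable Y)
    (hci : CondIndepFun m hm G Y P) {s : Set β} (hs : MeasurableSet s) {B : Set α}
    (hB : MeasurableSet[m] B) :
    (P.restrict (B ∩ G ⁻¹' s)).map Y =
      ((P.restrict B).withDensity fun a => ENNReal.ofReal ((P⟦G ⁻¹' s | m⟧) a)).map Y := by
  ext t ht
  have hYt : MeasurableSet (Y ⁻¹' t) := hY ht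
  have key : P.real (B ∩ G ⁻¹' s ∩ Y ⁻¹' t) = ∫ a in B ∩ Y ⁻¹' t, (P⟦G ⁻¹' s | m⟧) a ∂P := calc
    P.real (B ∩ G ⁻¹' s ∩ Y ⁻¹' t)
      = ∫ a in B, (G ⁻¹' s ∩ Y ⁻¹' t).indicator (fun _ => (1 : ℝ)) a ∂P := by
        rw [setIntegral_indicator ((hG hs).inter hYt), setIntegral_const, smul_eq_mul, mul_one,
          Set.inter_assoc]
    _ = ∫ a in B, (P⟦G ⁻¹' s ∩ Y ⁻¹' t | m⟧) a ∂P :=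
        (setIntegral_condExp hm ((integrable_const _).indicator ((hG hs).inter hYt)) hB).symm
    _ = ∫ a in B, (P⟦G ⁻¹' s | m⟧) a * (P⟦Y ⁻¹' t | m⟧) a ∂P :=
        setIntegral_congr_ae (hm B hB)
          (((condIndepFun_iff_condExp_inter_preimage_eq_mul hG hY).1 hci s t hs ht).mono
            fun a ha _ => ha)
    _ = ∫ a in B, (P⟦G ⁻¹' s | m⟧) a * (Y ⁻¹' t).indicator (fun _ => (1 : ℝ)) a ∂P :=
        (setIntegral_mul_condExp_of_bound hm hB stronglyMeasurable_condExp
          (norm_condExp_indicator_le_one _) ((integrable_const _).indicator hYt)).symm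
    _ = ∫ a in B ∩ Y ⁻¹' t, (P⟦G ⁻¹' s | m⟧) a ∂P := by
        rw [← setIntegral_indicator hYt]
        congr 1 with a
        by_cases ha : a ∈ Y ⁻¹' t <;> simp [ha]
  rw [Measure.map_apply hY ht, Measure.map_apply hY ht, Measure.restrict_apply hYt,
    withDensity_apply _ hYt, Measure.restrict_restrict hYt, Set.inter_comm, ← ofReal_measureReal,
    Set.inter_comm (Y ⁻¹' t), key, ofReal_integral_eq_lintegral_ofReal
      integrable_condExp.integrableOn (ae_restrict_of_ae (condExp_nonneg (ae_of_all _ fun a =>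
        Set.indicator_nonneg (fun _ _ => zero_le_one) a)))]

theorem setIntegral_inter_preimage_eq_setIntegral_condExp_mul [StandardBorelSpace α]
    [IsFiniteMeasure P] {G : α → β} {Y : α → ℝ} (hG : Measurable G) (hY : Measurable Y)
    (hci : CondIndepFun m hm G Y P) {s : Set β} (hs : MeasurableSet s) {B : Set α}
    (hB : MeasurableSet[m] B) :
    ∫ a in B ∩ G ⁻¹' s, Y a ∂P = ∫ a in B, (P⟦G ⁻¹' s | m⟧) a * Y a ∂P := by
  have hc0 : 0 ≤ᵐ[P] P⟦G ⁻¹' s | m⟧ :=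
    condExp_nonneg (ae_of_all _ fun a => Set.indicator_nonneg (fun _ _ => zero_le_one) a)
  calc ∫ a in B ∩ G ⁻¹' s, Y a ∂P = ∫ y, y ∂(P.restrict (B ∩ G ⁻¹' s)).map Y :=
        (integral_map hY.aemeasurable aestronglyMeasurable_id).symm
    _ = ∫ a, Y a ∂(P.restrict B).withDensity fun a => ENNReal.ofReal ((P⟦G ⁻¹' s | m⟧) a) := by
        rw [map_restrict_inter_preimage_eq_map_withDensity hG hY hci hs hB]
        exact integral_map hY.aemeasurable aestronglyMeasurable_id
    _ = ∫ a in B, (P⟦G ⁻¹' s | m⟧) a * Y a ∂P := by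
        rw [integral_withDensity_eq_integral_toReal_smul
          (stronglyMeasurable_condExp.measurable.mono hm le_rfl).ennreal_ofReal
          (ae_of_all _ fun _ => ENNReal.ofReal_lt_top)]
        refine integral_congr_ae ((ae_restrict_of_ae hc0).mono fun a ha => ?_)
        simp [ENNReal.toReal_ofReal ha]

theorem condExp_indicator_sub_condExp_eq_zero [StandardBorelSpace α] [IsFiniteMeasure P]
    {G : α → β} {Y : α → ℝ} (hG : Measurable G) (hY : Measurable Y) (hYi : Integrable Y P)
    (hci : CondIndepFun m hm G Y P) {s : Set β} (hs : MeasurableSet s) :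
    P[(G ⁻¹' s).indicator (fun a => Y a - P[Y|m] a)|m] =ᵐ[P] 0 := by
  have hE : Measurable (P[Y|m]) := stronglyMeasurable_condExp.measurable.mono hm le_rfl
  have hI : Integrable ((G ⁻¹' s).indicator fun a => Y a - P[Y|m] a) P :=
    (hYi.sub integrable_condExp).indicator (hG hs)
  refine (ae_eq_condExp_of_forall_setIntegral_eq hm hI (fun _ _ _ => integrableOn_zero)
    (fun B hB _ => ?_) aestronglyMeasurable_zero).symm
  rw [setIntegral_indicator (hG hs), integral_sub hYi.integrableOn integrable_condExp.integrableOn,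
    setIntegral_inter_preimage_eq_setIntegral_condExp_mul hG hY hci hs hB,
    setIntegral_inter_preimage_eq_setIntegral_condExp_mul hG hE
      (condIndepFun_of_measurable_right (hm' := hm) hG stronglyMeasurable_condExp.measurable) hs hB,
    setIntegral_mul_condExp_of_bound hm hB stronglyMeasurable_condExp
      (norm_condExp_indicator_le_one _) hYi]
  simp

theorem integral_cond_mul_sub_condExp_eq_zero [StandardBorelSpace α] [IsFiniteMeasure P]
    {G : α → β} {Y : α → ℝ} (hG : Measurable G) (hY : Measurable Y) (hYi : Integrable Y P)
    (hci : CondIndepFun m hm G Y P) {s : Set β} (hs : MeasurableSet s) {V : α → ℝ}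
    (hV : StronglyMeasurable[m] V) {R : ℝ} (hVR : ∀ᵐ a ∂P, ‖V a‖ ≤ R) :
    ∫ a, V a * (Y a - P[Y|m] a) ∂P[|G ⁻¹' s] = 0 := by
  have hI : Integrable ((G ⁻¹' s).indicator fun a => Y a - P[Y|m] a) P :=
    (hYi.sub integrable_condExp).indicator (hG hs)
  rw [ProbabilityTheory.cond, integral_smul_measure]
  suffices ∫ a in G ⁻¹' s, V a * (Y a - P[Y|m] a) ∂P = 0 by rw [this, smul_zero]
  calc ∫ a in G ⁻¹' s, V a * (Y a - P[Y|m] a) ∂P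
      = ∫ a, V a * (G ⁻¹' s).indicator (fun a => Y a - P[Y|m] a) a ∂P := by
        simp only [← Set.indicator_mul_right, integral_indicator (hG hs)]
    _ = ∫ a, V a * P[(G ⁻¹' s).indicator (fun a => Y a - P[Y|m] a)|m] a ∂P := by
        simpa using setIntegral_mul_condExp_of_bound hm MeasurableSet.univ hV hVR hI
    _ = 0 := by
        rw [integral_congr_ae ((condExp_indicator_sub_condExp_eq_zero hG hY hYi hci hs).mono
          fun a ha => by rw [ha, Pi.zero_apply, mul_zero])]
        exact integral_zero _ _

end ConditionalExpectation

section SubGaussian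

variable {α : Type*} [MeasurableSpace α] {μ : Measure α} {X : α → ℝ}

theorem Isoperimetric.subGaussianPar_comp {c : ℝ} {d : ℕ} {F : α → Euc d} (hF : Measurable F)
    (hiso : Isoperimetric c d (μ.map F)) {K : ℝ≥0} {g : Euc d → ℝ} (hg : LipschitzWith K g) :
    SubGaussianPar μ (g ∘ F) (K * √(c / d)) := by
  intro l
  have h := hiso K g K.2 (by simpa using hg) l
  rwa [integral_map hF.aemeasurable hg.continuous.aestronglyMeasurable,
    integral_map hF.aemeasurable (by have := hg.continuous.measurable; fun_prop)] at h

theorem integral_sub_integral [IsProbabilityMeasure μ] (hX : Integrable X μ) :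
    ∫ a, (X a - ∫ a', X a' ∂μ) ∂μ = 0 := by
  rw [integral_sub hX (integrable_const _), integral_const, probReal_univ, one_smul, sub_self]

theorem SubGaussianPar.sub_integral [IsProbabilityMeasure μ] {σ : ℝ} (h : SubGaussianPar μ X σ)
    (hX : Integrable X μ) : SubGaussianPar μ (fun a => X a - ∫ a', X a' ∂μ) σ := by
  intro l
  simpa only [integral_sub_integral hX, sub_zero] using h l

theorem SubGaussianPar.hasSubgaussianMGF_s10 {σ : ℝ} (h : SubGaussianPar μ X σ)
    (hX0 : ∫ a, X a ∂μ = 0) (hint : ∀ t, Integrable (fun a => exp (t * X a)) μ) {c : ℝ≥0}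
    (hσc : σ ^ 2 ≤ c) : HasSubgaussianMGF X c μ where
  integrable_exp_mul := hint
  mgf_le t := by
    have ht := h t
    simp only [hX0, sub_zero] at ht
    refine ht.trans (exp_le_exp.2 ?_)
    nlinarith [sq_nonneg t]

theorem ProbabilityTheory.HasSubgaussianMGF.of_forall_cond {ι : Type*} [Fintype ι]
    [MeasurableSpace ι] [DiscreteMeasurableSpace ι] [IsProbabilityMeasure μ] {G : α → ι}
    (hG : Measurable G) {c : ℝ≥0} (h : ∀ j, μ (G ⁻¹' {j}) ≠ 0 → HasSubgaussianMGF X c μ[|G ⁻¹' {j}]) :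
    HasSubgaussianMGF X c μ := by
  have hint : ∀ t j, Integrable (fun a => exp (t * X a)) (μ (G ⁻¹' {j}) • μ[|G ⁻¹' {j}]) := by
    intro t j
    rcases eq_or_ne (μ (G ⁻¹' {j})) 0 with hj | hj
    · simp [hj]
    · exact ((h j hj).integrable_exp_mul t).smul_measure (measure_ne_top _ _)
  have htotal := sum_meas_smul_cond_fiber hG μ
  refine ⟨fun t => ?_, fun t => ?_⟩
  · rw [← htotal]
    exact integrable_finsetSum_measure.2 fun j _ => hint t j
  · calc mgf X μ t = ∑ j, μ.real (G ⁻¹' {j}) * mgf X μ[|G ⁻¹' {j}] t := by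
          rw [mgf]
          conv_lhs => rw [← htotal]
          rw [integral_finsetSum_measure fun j _ => hint t j]
          simp only [integral_smul_measure, smul_eq_mul, Measure.real, mgf]
      _ ≤ ∑ j, μ.real (G ⁻¹' {j}) * exp (c * t ^ 2 / 2) := by
          refine Finset.sum_le_sum fun j _ => ?_
          rcases eq_or_ne (μ (G ⁻¹' {j})) 0 with hj | hj
          · simp [Measure.real, hj]
          · exact mul_le_mul_of_nonneg_left ((h j hj).mgf_le t) measureReal_nonneg
      _ = exp (c * t ^ 2 / 2) := by
          rw [← Finset.sum_mul,
            sum_measureReal_preimage_singleton _ fun j _ => hG (measurableSet_singleton j),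
            Finset.coe_univ, Set.preimage_univ, probReal_univ, one_mul]

theorem ProbabilityTheory.HasSubgaussianMGF.measure_pi_mean_le_neg_le [IsProbabilityMeasure μ]
    {c : ℝ≥0} (h : HasSubgaussianMGF X c μ) (n : ℕ) {ε : ℝ} (hε : 0 ≤ ε) :
    (Measure.pi fun _ : Fin n => μ) {ω | (1 / (n : ℝ)) * ∑ i, X (ω i) ≤ -ε} ≤
      ENNReal.ofReal (exp (-(n * ε ^ 2) / (2 * c))) := by
  rcases Nat.eq_zero_or_pos n with rfl | hn
  · simpa using prob_le_one
  have hn' : (0 : ℝ) < n := Nat.cast_pos.2 hn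
  have hset : {ω : Fin n → α | (1 / (n : ℝ)) * ∑ i, X (ω i) ≤ -ε} =
      {ω | n * ε ≤ ∑ i ∈ Finset.univ, -X (ω i)} := by
    ext ω
    simp only [Set.mem_ofPred_eq, Finset.sum_neg_distrib, one_div, inv_mul_le_iff₀ hn']
    constructor <;> intro h <;> linarith
  have hsub : ∀ i ∈ (Finset.univ : Finset (Fin n)),
      HasSubgaussianMGF (fun ω : Fin n → α => -X (ω i)) c (Measure.pi fun _ => μ) := by
    intro i _
    refine HasSubgaussianMGF.of_map (X := -X) (measurable_pi_apply i).aemeasurable ?_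
    rw [(measurePreserving_eval (fun _ : Fin n => μ) i).map_eq]
    exact h.neg
  have hindep := iIndepFun_pi (μ := fun _ : Fin n => μ) (X := fun _ a => -X a)
    fun _ => h.aemeasurable.neg
  rw [hset, ← ofReal_measureReal]
  refine ENNReal.ofReal_le_ofReal ((measure_sum_ge_le_of_iIndepFun hindep hsub
    (by positivity)).trans_eq ?_)
  congr 1
  rcases eq_or_ne (c : ℝ) 0 with hc | hc
  · simp [hc]
  · simp only [Finset.sum_const, Finset.card_univ, Fintype.card_fin, nsmul_eq_mul,
      NNReal.coe_mul, NNReal.coe_natCast]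
    field_simp

end SubGaussian

theorem MultConstGood.hasSubgaussianMGF_cond {C : ℝ} (hC : MultConstGood C) {α : Type} {β : Type*}
    {m mα : MeasurableSpace α} [StandardBorelSpace α] {hm : m ≤ mα} [MeasurableSpace β]
    {P : Measure α} [IsProbabilityMeasure P] {G : α → β} {Y : α → ℝ} (hG : Measurable G)
    (hY : Measurable Y) (hYi : Integrable Y P) (hci : CondIndepFun m hm G Y P) {s : Set β}
    (hs : MeasurableSet s) (hPs : P (G ⁻¹' s) ≠ 0) {U : α → ℝ} (hU : StronglyMeasurable[m] U)
    {R : ℝ} (hUR : ∀ a, |U a| ≤ R) {σ : ℝ} (hUσ : SubGaussianPar P[|G ⁻¹' s] U σ) {M : ℝ}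
    (hYM : ∀ᵐ a ∂P, |P[Y|m] a - Y a| ≤ M) {c : ℝ≥0} (hc : (C * M * σ) ^ 2 ≤ c) :
    HasSubgaussianMGF (fun a => (P[Y|m] a - Y a) * (U a - ∫ a', U a' ∂P[|G ⁻¹' s]))
      c P[|G ⁻¹' s] := by
  have := cond_isProbabilityMeasure hPs
  set μ := P[|G ⁻¹' s]
  set k := ∫ a, U a ∂μ
  have hUi : Integrable U μ :=
    Integrable.of_bound (hU.mono hm).aestronglyMeasurable R (ae_of_all _ fun a => hUR a)
  have hV : StronglyMeasurable[m] fun a => U a - k := hU.sub stronglyMeasurable_const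
  have hVR : ∀ a, |U a - k| ≤ R + |k| := fun a => (abs_sub _ _).trans (by linarith [hUR a])
  have hE : Measurable (P[Y|m]) := stronglyMeasurable_condExp.measurable.mono hm le_rfl
  have hZV : ∫ a, (P[Y|m] a - Y a) * (U a - k) ∂μ = 0 := by
    have h := integral_cond_mul_sub_condExp_eq_zero hG hY hYi hci hs hV
      (ae_of_all _ fun a => hVR a)
    rw [← neg_eq_zero, ← integral_neg, ← h]
    congr 1 with a
    ring
  have hZM : ∀ᵐ a ∂μ, |P[Y|m] a - Y a| ≤ M := cond_absolutelyContinuous.ae_le hYM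
  have hmul := hC.2 α μ inferInstance _ _ σ M (hV.measurable.mono hm le_rfl) (hE.sub hY)
    (hUσ.sub_integral hUi) (integral_sub_integral hUi) hZV hZM
  refine hmul.hasSubgaussianMGF_s10 hZV (fun t => integrable_exp_mul_of_mem_Icc
    (a := -(M * (R + |k|))) (b := M * (R + |k|))
    ((hE.sub hY).mul (hV.measurable.mono hm le_rfl)).aemeasurable ?_) hc
  filter_upwards [hZM] with a ha
  rw [Set.mem_Icc, ← abs_le, abs_mul]
  exact mul_le_mul ha (hVR a) (abs_nonneg _) ((abs_nonneg _).trans ha)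

theorem MultConstGood.hasSubgaussianMGF_mixture {C : ℝ} (hC : MultConstGood C) {α ι E : Type}
    [MeasurableSpace α] [StandardBorelSpace α] [Fintype ι] [MeasurableSpace ι]
    [DiscreteMeasurableSpace ι] [MeasurableSpace E] {P : Measure α} [IsProbabilityMeasure P]
    {G : α → ι} {X : α → E} {Y : α → ℝ} (hG : Measurable G) (hX : Measurable X)
    (hY : Measurable Y) (hYi : Integrable Y P)
    (hci : CondIndepFun (MeasurableSpace.comap X inferInstance) hX.comap_le G Y P)
    {g : E → ℝ} (hg : Measurable g) {R : ℝ} (hgR : ∀ x, |g x| ≤ R) {σ : ℝ}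
    (hgσ : ∀ j, SubGaussianPar P[|G ⁻¹' {j}] (g ∘ X) σ) {M : ℝ}
    (hYM : ∀ᵐ a ∂P, |P[Y|MeasurableSpace.comap X inferInstance] a - Y a| ≤ M) {c : ℝ≥0}
    (hc : (C * M * σ) ^ 2 ≤ c) :
    HasSubgaussianMGF (fun a => (P[Y|MeasurableSpace.comap X inferInstance] a - Y a) *
      (g (X a) - ∫ a', g (X a') ∂P[|G ⁻¹' {G a}])) c P := by
  refine HasSubgaussianMGF.of_forall_cond hG fun j hj => ?_
  refine (hC.hasSubgaussianMGF_cond hG hY hYi hci (measurableSet_singleton j) hj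
    (hg.comp (comap_measurable X)).stronglyMeasurable (fun a => hgR _) (hgσ j) hYM hc).congr ?_
  filter_upwards [ae_cond_mem (hG (measurableSet_singleton j))] with a ha
  rw [show G a = j from ha]
  rfl

theorem LipschitzOnWith.isBounded_image {E F : Type*} [PseudoMetricSpace E] [PseudoMetricSpace F]
    {K : ℝ≥0} {h : E → F} {s : Set E} (hh : LipschitzOnWith K h s) (hs : Bornology.IsBounded s) :
    Bornology.IsBounded (h '' s) := by
  obtain ⟨D, hD⟩ := Metric.isBounded_iff.1 hs
  exact Metric.isBounded_image_iff.2
    ⟨K * D, fun x hx y hy => (hh.dist_le_mul x hx y hy).trans (by gcongr; exact hD hx hy)⟩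

theorem IsCompact.exists_forall_mem_Icc_add {E : Type*} [TopologicalSpace E] {s : Set E}
    (hs : IsCompact s) (hne : s.Nonempty) {u : E → ℝ} (hu : ContinuousOn u s) {D : ℝ}
    (hD : ∀ x ∈ s, ∀ y ∈ s, |u x - u y| ≤ D) : ∃ I, ∀ y ∈ s, u y ∈ Set.Icc I (I + D) := by
  obtain ⟨x, hx, hmin⟩ := hs.exists_isMinOn hne hu
  exact ⟨u x, fun y hy => ⟨isMinOn_iff.1 hmin y hy, by linarith [(abs_le.1 (hD y hy x hx)).2]⟩⟩

theorem sq_mul_toNNReal_mul_sqrt_le {C M L Lg c : ℝ} {d : ℕ} (hL : 0 ≤ L) (hc : 0 ≤ c) :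
    (C * M * (↑(Lg.toNNReal * L.toNNReal) * √(c / d))) ^ 2 ≤
      (c * C ^ 2 * M ^ 2 * L ^ 2 * Lg ^ 2 / d).toNNReal := by
  have hLg : (Lg.toNNReal : ℝ) ^ 2 ≤ Lg ^ 2 := by
    rcases le_total 0 Lg with h | h
    · rw [Real.coe_toNNReal Lg h]
    · simpa [Real.toNNReal_of_nonpos h] using sq_nonneg Lg
  calc (C * M * (↑(Lg.toNNReal * L.toNNReal) * √(c / d))) ^ 2
      = C ^ 2 * M ^ 2 * (Lg.toNNReal : ℝ) ^ 2 * L ^ 2 * (c / d) := by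
        rw [NNReal.coe_mul, Real.coe_toNNReal L hL, mul_pow, mul_pow, mul_pow,
          Real.sq_sqrt (by positivity)]
        ring
    _ ≤ C ^ 2 * M ^ 2 * Lg ^ 2 * L ^ 2 * (c / d) := by gcongr
    _ = c * C ^ 2 * M ^ 2 * L ^ 2 * Lg ^ 2 / d := by ring
    _ ≤ _ := Real.le_coe_toNNReal _

/-- A sample is `q = (G, X, Y)` and `η` is a version of `x ↦ E[Y | X = x]`; the summand is
`T_{i,ℓ} · V̂(f)_{i,ℓ}`. -/
theorem That_Vhat_concentration_general (d K r : ℕ) (Ω : Set (Euc K))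
    (hΩc : IsCompact Ω)
    (dΩ : ℝ) (hdΩ : ∀ x ∈ Ω, ∀ y ∈ Ω, ∀ ℓ : Fin K, |x ℓ - y ℓ| ≤ dΩ)
    (φ : Euc K → ℝ)
    (P : Measure (Fin r × Euc d × Euc K)) [IsProbabilityMeasure P]
    (hsupp : ∀ᵐ q ∂P, q.2.2 ∈ Ω)
    (c : ℝ) (hc : 0 < c)
    (hiso : ∀ k : Fin r, Isoperimetric c d ((P[|{q | q.1 = k}]).map (fun q => q.2.1)))
    (hci : CondIndepFun
      (MeasurableSpace.comap (fun q : Fin r × Euc d × Euc K => q.2.1) inferInstance)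
      (measurable_fst.comp measurable_snd).comap_le (fun q => q.1) (fun q => q.2.2) P)
    (η : Euc d → Euc K)
    (hver : (fun q : Fin r × Euc d × Euc K => η q.2.1) =ᵐ[P]
      P[(fun q : Fin r × Euc d × Euc K => q.2.2) |
        MeasurableSpace.comap (fun q : Fin r × Euc d × Euc K => q.2.1) inferInstance])
    (C : ℝ) (hC : MultConstGood C)
    (L Lg : ℝ) (hL : 0 ≤ L)
    (f : Euc d → Euc K) (hfΩ : ∀ x, f x ∈ Ω)
    (hflip : LipschitzWith (Real.toNNReal L) f)
    (hLg : ∀ ℓ : Fin K, LipschitzOnWith (Real.toNNReal Lg)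
      (fun y => gradient φ y ℓ) (Set.range f))
    (ℓ : Fin K) (n : ℕ) (ε : ℝ) (hε : 0 < ε) :
    (Measure.pi fun _ : Fin n => P)
        {ω | (1 / (n : ℝ)) * ∑ i,
            (-((ω i).2.2 ℓ - η ((ω i).2.1) ℓ)) *
              (gradient φ (f ((ω i).2.1)) ℓ -
                ∫ q, gradient φ (f q.2.1) ℓ ∂(P[|{q | q.1 = (ω i).1}])) ≤ -ε} ≤
      ENNReal.ofReal (Real.exp
        (-(n * d * ε ^ 2) / (2 * c * C ^ 2 * dΩ ^ 2 * L ^ 2 * Lg ^ 2))) := by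
  set X : Fin r × Euc d × Euc K → Euc d := fun q => q.2.1
  have hX : Measurable X := measurable_fst.comp measurable_snd
  have hcoord : Continuous fun y : Euc K => y ℓ := (EuclideanSpace.proj ℓ).continuous
  set Y : Fin r × Euc d × Euc K → ℝ := fun q => q.2.2 ℓ
  have hY : Measurable Y := hcoord.measurable.comp (measurable_snd.comp measurable_snd)
  obtain ⟨I, hI⟩ := hΩc.exists_forall_mem_Icc_add (hsupp.exists.elim fun q hq => ⟨_, hq⟩)
    hcoord.continuousOn fun x hx y hy => hdΩ x hx y hy ℓ
  have hYI : ∀ᵐ q ∂P, Y q ∈ Set.Icc I (I + dΩ) := hsupp.mono fun q hq => hI _ hq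
  have hYi : Integrable Y P := Integrable.of_mem_Icc _ _ hY.aemeasurable hYI
  have hηY : (fun q => η q.2.1 ℓ) =ᵐ[P] P[Y|MeasurableSpace.comap X inferInstance] := by
    obtain ⟨R, hR⟩ := isBounded_iff_forall_norm_le.1 hΩc.isBounded
    have hYv : Integrable (fun q : Fin r × Euc d × Euc K => q.2.2) P :=
      Integrable.of_bound (measurable_snd.comp measurable_snd).aestronglyMeasurable R
        (hsupp.mono fun q hq => hR _ hq)
    exact (hver.fun_comp (· ℓ)).trans ((EuclideanSpace.proj ℓ).comp_condExp_comm hYv)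
  set g : Euc d → ℝ := fun x => gradient φ (f x) ℓ
  have hg : LipschitzWith (Lg.toNNReal * L.toNNReal) g :=
    lipschitzOnWith_univ.1 ((hLg ℓ).comp hflip.lipschitzOnWith fun x _ => Set.mem_range_self x)
  obtain ⟨B, hB⟩ := isBounded_iff_forall_norm_le.1 ((hLg ℓ).isBounded_image
    (hΩc.isBounded.subset (Set.range_subset_iff.2 hfΩ)))
  have hW := hC.hasSubgaussianMGF_mixture measurable_fst hX hY hYi
    (hci.comp measurable_id hcoord.measurable) hg.continuous.measurable
    (fun x => hB _ ⟨f x, Set.mem_range_self x, rfl⟩) (fun j => (hiso j).subGaussianPar_comp hX hg)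
    (ae_abs_condExp_sub_le hX.comap_le hYi hYI) (sq_mul_toNNReal_mul_sqrt_le hL hc.le)
  have hT : HasSubgaussianMGF (fun q => (-(q.2.2 ℓ - η q.2.1 ℓ)) *
      (g q.2.1 - ∫ q', g q'.2.1 ∂(P[|{q' | q'.1 = q.1}])))
      (c * C ^ 2 * dΩ ^ 2 * L ^ 2 * Lg ^ 2 / d).toNNReal P := by
    refine hW.congr (hηY.mono fun q hq => ?_)
    dsimp only
    rw [← hq, neg_sub]
    rfl
  refine (hT.measure_pi_mean_le_neg_le n hε.le).trans_eq ?_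
  rw [Real.coe_toNNReal _ (by positivity), ← mul_div_assoc, div_div_eq_mul_div]
  congr 2
  ring

/-- **Concentration of `(1/n) ∑ᵢ T_{i,ℓ} V̂(f)_{i,ℓ}` in the mixture model.** Here
`G ∈ [r]` is the mixture label, the conditional law of `X` given `G = k` is
`c`-isoperimetric, `Y` is conditionally independent of `G` given `X`,
`T_{i,ℓ} = −(Y_{i,ℓ} − E[Y_{i,ℓ}|Xᵢ])` and
`V̂(f)_{i,ℓ} = ∇φ(f(Xᵢ))_ℓ − E[∇φ(f(Xᵢ))_ℓ | Gᵢ]`. -/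
theorem That_Vhat_concentration (d K r : ℕ) (Ω : Set (Euc K))
    (hΩconv : Convex ℝ Ω) (hΩc : IsCompact Ω)
    (dΩ : ℝ) (hdΩ : ∀ x ∈ Ω, ∀ y ∈ Ω, ∀ ℓ : Fin K, |x ℓ - y ℓ| ≤ dΩ)
    (φ : Euc K → ℝ) (hφ : StrictConvexOn ℝ Ω φ) (hφd : ContDiff ℝ 1 φ)
    (P : Measure (Fin r × Euc d × Euc K)) [IsProbabilityMeasure P]
    (hsupp : ∀ᵐ q ∂P, q.2.2 ∈ Ω)
    (c : ℝ) (hc : 0 < c)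
    (hiso : ∀ k : Fin r, Isoperimetric c d ((P[|{q | q.1 = k}]).map (fun q => q.2.1)))
    (hci : CondIndepFun
      (MeasurableSpace.comap (fun q : Fin r × Euc d × Euc K => q.2.1) inferInstance)
      (measurable_fst.comp measurable_snd).comap_le (fun q => q.1) (fun q => q.2.2) P)
    (η : Euc d → Euc K) (hη : Measurable η)
    (hver : (fun q : Fin r × Euc d × Euc K => η q.2.1) =ᵐ[P]
      P[(fun q : Fin r × Euc d × Euc K => q.2.2) |
        MeasurableSpace.comap (fun q : Fin r × Euc d × Euc K => q.2.1) inferInstance])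
    (C : ℝ) (hC : MultConstGood C)
    (L Lg : ℝ) (hL : 0 ≤ L)
    (f : Euc d → Euc K) (hf : Measurable f) (hfΩ : ∀ x, f x ∈ Ω)
    (hflip : LipschitzWith (Real.toNNReal L) f)
    (hLg : ∀ ℓ : Fin K, LipschitzOnWith (Real.toNNReal Lg)
      (fun y => gradient φ y ℓ) (Set.range f))
    (ℓ : Fin K) (n : ℕ) (ε : ℝ) (hε : 0 < ε) :
    (Measure.pi fun _ : Fin n => P)
        {ω | (1 / (n : ℝ)) * ∑ i,
            (-((ω i).2.2 ℓ - η ((ω i).2.1) ℓ)) *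
              (gradient φ (f ((ω i).2.1)) ℓ -
                ∫ q, gradient φ (f q.2.1) ℓ ∂(P[|{q | q.1 = (ω i).1}])) ≤ -ε} ≤
      ENNReal.ofReal (Real.exp
        (-(n * d * ε ^ 2) / (2 * c * C ^ 2 * dΩ ^ 2 * L ^ 2 * Lg ^ 2))) :=
  That_Vhat_concentration_general d K r Ω hΩc dΩ hdΩ φ P hsupp c hc hiso hci η hver C hC L Lg hL f
    hfΩ hflip hLg ℓ n ε hε
end
end

section
/- Let V₁, V₂, …, V_n be independent mean-zero random vectors in ℝ^d such that ‖V_i‖ ≤ b holds almost surely for each i. Then for every t ≥ 0, Pr[ ‖(1/n)Σ_{i=1}^n V_i‖ ≥ t ] ≤ 2·exp(−nt²/(16b²)). -/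
/-!
Pinelis's `cosh` argument. As `w ↦ cosh √w` is convex, for `‖v‖ ≤ b` the function `cosh ‖s + v‖`
lies below an affine function of `v` with constant term `cosh ‖s‖ * cosh b`. Averaging over an
independent mean-zero increment thus gives `E cosh ‖S + V‖ ≤ cosh b * E cosh ‖S‖`, and iterating,
`E cosh (l ‖∑ Vᵢ‖) ≤ cosh (l b) ^ n ≤ exp (n l² b² / 2)`. The Chernoff bound with `exp ≤ 2 cosh`
and `l = r / (n b²)` yields `P(‖∑ Vᵢ‖ ≥ r) ≤ 2 exp (-r² / (2 n b²))`; take `r = n t`.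
-/

open MeasureTheory ProbabilityTheory Real
open scoped ENNReal RealInnerProductSpace

noncomputable section

theorem convexOn_cosh_sqrt : ConvexOn ℝ (Set.Ici 0) fun w ↦ cosh √w := by
  have hasSum_cosh_sqrt {w : ℝ} (hw : 0 ≤ w) :
      HasSum (fun k ↦ w ^ k / (2 * k).factorial) (cosh √w) := by
    simpa [pow_mul, sq_sqrt hw] using hasSum_cosh √w
  refine ⟨convex_Ici 0, fun u hu v hv θ η hθ hη hθη ↦ ?_⟩
  refine hasSum_le (fun k ↦ ?_) (hasSum_cosh_sqrt (convex_Ici 0 hu hv hθ hη hθη))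
    (((hasSum_cosh_sqrt hu).mul_left θ).add ((hasSum_cosh_sqrt hv).mul_left η))
  have hk := (convexOn_pow k).2 hu hv hθ hη hθη
  simp only [smul_eq_mul] at hk ⊢
  rw [mul_div_assoc', mul_div_assoc', ← add_div]
  gcongr

section InnerProductSpace

variable {E : Type*} [NormedAddCommGroup E] [InnerProductSpace ℝ E]

-- At `s = 0` or `b = 0` the coefficient is `0 / 0 = 0`.
theorem cosh_norm_add_le {b : ℝ} (s v : E) (hv : ‖v‖ ≤ b) :
    cosh ‖s + v‖ ≤ cosh ‖s‖ * cosh b + ⟪(sinh ‖s‖ * sinh b / (‖s‖ * b)) • s, v⟫ := by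
  rcases (norm_nonneg v |>.trans hv).eq_or_lt with rfl | hb
  · simp [norm_le_zero_iff.1 hv]
  rcases eq_or_ne s 0 with rfl | hs
  · simp only [zero_add, norm_zero, cosh_zero, sinh_zero, zero_mul, zero_div, smul_zero,
      inner_zero_left, one_mul, add_zero]
    rwa [cosh_le_cosh, abs_of_nonneg (norm_nonneg v), abs_of_nonneg hb.le]
  set a := ‖s‖
  set x := ⟪s, v⟫
  have ha : 0 < a := norm_pos_iff.2 hs
  have hab : 0 < a * b := mul_pos ha hb
  have hx : |x / (a * b)| ≤ 1 := by
    rw [abs_div, abs_of_pos hab]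
    exact div_le_one_of_le₀ ((abs_real_inner_le_norm s v).trans (by gcongr)) hab.le
  -- the weight `θ` writes `a² + 2x + b²` as a convex combination of `(a + b)²` and `(a - b)²`
  set θ := (1 + x / (a * b)) / 2 with hθ_def
  have hθ : 0 ≤ θ ∧ 0 ≤ 1 - θ := by constructor <;> linarith [abs_le.1 hx]
  have hsq : ‖s + v‖ ^ 2 ≤ θ * (a + b) ^ 2 + (1 - θ) * (a - b) ^ 2 := by
    have hcomb : θ * (a + b) ^ 2 + (1 - θ) * (a - b) ^ 2 = a ^ 2 + 2 * x + b ^ 2 := by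
      rw [hθ_def]; field_simp; ring
    rw [hcomb, norm_add_sq_real]
    nlinarith [norm_nonneg v]
  calc cosh ‖s + v‖ = cosh √(‖s + v‖ ^ 2) := by rw [sqrt_sq (norm_nonneg _)]
    _ ≤ cosh √(θ * (a + b) ^ 2 + (1 - θ) * (a - b) ^ 2) := by
      rw [cosh_le_cosh, abs_of_nonneg (sqrt_nonneg _), abs_of_nonneg (sqrt_nonneg _)]
      exact sqrt_le_sqrt hsq
    _ ≤ θ * cosh √((a + b) ^ 2) + (1 - θ) * cosh √((a - b) ^ 2) :=
      convexOn_cosh_sqrt.2 (sq_nonneg (a + b)) (sq_nonneg (a - b)) hθ.1 hθ.2 (add_sub_cancel θ 1)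
    _ = cosh a * cosh b + ⟪(sinh a * sinh b / (a * b)) • s, v⟫ := by
      rw [sqrt_sq_eq_abs, sqrt_sq_eq_abs, cosh_abs, cosh_abs, cosh_add, cosh_sub,
        real_inner_smul_left, hθ_def]
      field_simp
      ring

theorem norm_sinh_mul_div_smul {b : ℝ} (hb : 0 ≤ b) (s : E) :
    ‖(sinh ‖s‖ * sinh b / (‖s‖ * b)) • s‖ = sinh ‖s‖ * sinh b / b := by
  have : 0 ≤ sinh b := sinh_nonneg_iff.2 hb
  rw [norm_smul, norm_of_nonneg (by positivity)]
  rcases eq_or_ne ‖s‖ 0 with hs | hs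
  · simp [hs]
  · field_simp

variable [CompleteSpace E] [MeasurableSpace E] [BorelSpace E] [SecondCountableTopology E]
  {Ω : Type*} [MeasurableSpace Ω] {μ : Measure Ω} [IsProbabilityMeasure μ]

theorem integral_cosh_norm_add_le {X Y : Ω → E} {B b : ℝ} (hX : Measurable X)
    (hY : Measurable Y) (hXY : IndepFun X Y μ) (hY0 : μ[Y] = 0)
    (hXB : ∀ᵐ ω ∂μ, ‖X ω‖ ≤ B) (hYb : ∀ᵐ ω ∂μ, ‖Y ω‖ ≤ b) :
    ∫ ω, cosh ‖X ω + Y ω‖ ∂μ ≤ (∫ ω, cosh ‖X ω‖ ∂μ) * cosh b := by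
  have hb : 0 ≤ b := by
    obtain ⟨ω, hω⟩ := hYb.exists
    exact (norm_nonneg _).trans hω
  set f : E → E := fun s ↦ (sinh ‖s‖ * sinh b / (‖s‖ * b)) • s
  have hf : Measurable f := by fun_prop
  have hfX : Integrable (fun ω ↦ f (X ω)) μ := by
    refine .of_bound (hf.comp hX).aestronglyMeasurable (sinh B * sinh b / b) ?_
    filter_upwards [hXB] with ω hω
    have : 0 ≤ sinh b := sinh_nonneg_iff.2 hb
    rw [norm_sinh_mul_div_smul hb]
    gcongr
    exact sinh_le_sinh.2 hω
  have hcoshX : Integrable (fun ω ↦ cosh ‖X ω‖) μ := by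
    refine .of_bound (by fun_prop) (cosh B) ?_
    filter_upwards [hXB] with ω hω
    rw [norm_of_nonneg (cosh_pos _).le, cosh_le_cosh, abs_norm]
    exact hω.trans (le_abs_self B)
  have hfXY : IndepFun (fun ω ↦ f (X ω)) Y μ := hXY.comp hf measurable_id
  have hY : Integrable Y μ := .of_bound hY.aestronglyMeasurable b hYb
  have hinner : Integrable (fun ω ↦ ⟪f (X ω), Y ω⟫) μ := hfXY.integrable_bilin hfX hY (innerSL ℝ)
  calc ∫ ω, cosh ‖X ω + Y ω‖ ∂μ
      ≤ ∫ ω, (cosh ‖X ω‖ * cosh b + ⟪f (X ω), Y ω⟫) ∂μ := by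
        refine integral_mono_of_nonneg (.of_forall fun ω ↦ (cosh_pos _).le)
          ((hcoshX.mul_const _).add hinner) ?_
        filter_upwards [hYb] with ω hω using cosh_norm_add_le (X ω) (Y ω) hω
    _ = (∫ ω, cosh ‖X ω‖ ∂μ) * cosh b := by
        have hcross : ∫ ω, ⟪f (X ω), Y ω⟫ ∂μ = 0 := by
          refine (hfXY.integral_bilin hfX hY (innerSL ℝ)).trans ?_
          simp [hY0]
        rw [integral_add (hcoshX.mul_const _) hinner, integral_mul_const, hcross, add_zero]

end InnerProductSpace

section Sums

open Finset

variable {Ω ι : Type*} [MeasurableSpace Ω] {μ : Measure Ω} {E : Type*}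

theorem ae_norm_sum_le [SeminormedAddCommGroup E] {V : ι → Ω → E} {b : ℝ}
    (hbdd : ∀ i, ∀ᵐ ω ∂μ, ‖V i ω‖ ≤ b) (s : Finset ι) :
    ∀ᵐ ω ∂μ, ‖∑ i ∈ s, V i ω‖ ≤ #s * b := by
  filter_upwards [(Filter.eventually_all_finset s).2 fun i _ ↦ hbdd i] with ω hω
  calc ‖∑ i ∈ s, V i ω‖ ≤ ∑ i ∈ s, ‖V i ω‖ := norm_sum_le _ _
    _ ≤ ∑ _i ∈ s, b := sum_le_sum hω
    _ = #s * b := by rw [sum_const, nsmul_eq_mul]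

variable [NormedAddCommGroup E] [InnerProductSpace ℝ E] [CompleteSpace E] [MeasurableSpace E]
  [BorelSpace E] [SecondCountableTopology E] [IsProbabilityMeasure μ] {V : ι → Ω → E} {b : ℝ}

theorem integral_cosh_norm_sum_le (hmeas : ∀ i, Measurable (V i)) (hindep : iIndepFun V μ)
    (hmean : ∀ i, μ[V i] = 0) (hbdd : ∀ i, ∀ᵐ ω ∂μ, ‖V i ω‖ ≤ b) (s : Finset ι) :
    ∫ ω, cosh ‖∑ i ∈ s, V i ω‖ ∂μ ≤ cosh b ^ #s := by
  classical
  induction s using Finset.induction_on with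
  | empty => simp
  | insert j s hj ih =>
    have hindep_sum : IndepFun (fun ω ↦ ∑ i ∈ s, V i ω) (V j) μ := by
      have := hindep.indepFun_finsetSum_of_notMem hmeas hj
      rwa [Finset.sum_fn] at this
    calc ∫ ω, cosh ‖∑ i ∈ insert j s, V i ω‖ ∂μ
        = ∫ ω, cosh ‖∑ i ∈ s, V i ω + V j ω‖ ∂μ := by simp_rw [sum_insert hj, add_comm]
      _ ≤ (∫ ω, cosh ‖∑ i ∈ s, V i ω‖ ∂μ) * cosh b :=
        integral_cosh_norm_add_le (by fun_prop) (hmeas j) hindep_sum (hmean j)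
          (ae_norm_sum_le hbdd s) (hbdd j)
      _ ≤ cosh b ^ #(insert j s) := by
        rw [card_insert_of_notMem hj, pow_succ]
        gcongr

theorem measureReal_norm_sum_ge_le_exp [Fintype ι] (hmeas : ∀ i, Measurable (V i))
    (hindep : iIndepFun V μ) (hmean : ∀ i, μ[V i] = 0) (hbdd : ∀ i, ∀ᵐ ω ∂μ, ‖V i ω‖ ≤ b)
    {l : ℝ} (hl : 0 ≤ l) (r : ℝ) :
    μ.real {ω | r ≤ ‖∑ i, V i ω‖} ≤
      2 * exp (Fintype.card ι * (l * b) ^ 2 / 2 - l * r) := by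
  have hcosh_le : ∫ ω, cosh (l * ‖∑ i, V i ω‖) ∂μ ≤ cosh (l * b) ^ Fintype.card ι := by
    have := integral_cosh_norm_sum_le (V := fun i ω ↦ l • V i ω) (b := l * b) (by fun_prop)
      (hindep.comp (fun _ ↦ (l • ·)) fun _ ↦ by fun_prop)
      (fun i ↦ by rw [integral_smul, hmean i, smul_zero])
      (fun i ↦ by filter_upwards [hbdd i] with ω hω; rw [norm_smul, norm_of_nonneg hl]; gcongr)
      univ
    simpa [← smul_sum, norm_smul, abs_of_nonneg hl] using this
  have hcosh_int : Integrable (fun ω ↦ cosh (l * ‖∑ i, V i ω‖)) μ := by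
    refine .of_bound (by fun_prop) (cosh (l * (Fintype.card ι * b))) ?_
    filter_upwards [ae_norm_sum_le hbdd univ] with ω hω
    rw [card_univ] at hω
    rw [norm_of_nonneg (cosh_pos _).le, cosh_le_cosh, abs_of_nonneg (by positivity)]
    exact (le_abs_self _).trans' (by gcongr)
  have hexp_le (x : ℝ) : exp x ≤ 2 * cosh x := by
    rw [← cosh_add_sinh]; linarith [sinh_lt_cosh x]
  have hexp_int : Integrable (fun ω ↦ exp (l * ‖∑ i, V i ω‖)) μ :=
    (hcosh_int.const_mul 2).mono' (by fun_prop)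
      (.of_forall fun ω ↦ by rw [norm_of_nonneg (exp_pos _).le]; exact hexp_le _)
  calc μ.real {ω | r ≤ ‖∑ i, V i ω‖}
      ≤ exp (-l * r) * mgf (fun ω ↦ ‖∑ i, V i ω‖) μ l := measure_ge_le_exp_mul_mgf r hl hexp_int
    _ ≤ exp (-l * r) * (2 * cosh (l * b) ^ Fintype.card ι) := by
      gcongr
      refine (integral_mono hexp_int (hcosh_int.const_mul 2) fun ω ↦ hexp_le _).trans ?_
      rw [integral_const_mul]
      gcongr
    _ ≤ exp (-l * r) * (2 * exp ((l * b) ^ 2 / 2) ^ Fintype.card ι) := by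
      gcongr
      exact cosh_le_exp_half_sq _
    _ = 2 * exp (Fintype.card ι * (l * b) ^ 2 / 2 - l * r) := by
      rw [← exp_nat_mul, mul_left_comm, ← exp_add]
      ring_nf

theorem measureReal_norm_sum_ge_le_of_iIndepFun [Fintype ι] (hmeas : ∀ i, Measurable (V i))
    (hindep : iIndepFun V μ) (hmean : ∀ i, μ[V i] = 0) (hbdd : ∀ i, ∀ᵐ ω ∂μ, ‖V i ω‖ ≤ b)
    {r : ℝ} (hr : 0 ≤ r) :
    μ.real {ω | r ≤ ‖∑ i, V i ω‖} ≤ 2 * exp (-r ^ 2 / (2 * Fintype.card ι * b ^ 2)) := by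
  have hl : 0 ≤ r / (Fintype.card ι * b ^ 2) := by positivity
  convert measureReal_norm_sum_ge_le_exp hmeas hindep hmean hbdd hl r using 3
  rcases eq_or_ne ((Fintype.card ι : ℝ) * b) 0 with hnb | hnb
  · rcases mul_eq_zero.1 hnb with h | h <;> simp [h]
  · obtain ⟨hn, hb⟩ := mul_ne_zero_iff.1 hnb
    field_simp
    ring

end Sums

/-- **Vector-valued Hoeffding-type inequality.** If `V₁, …, Vₙ` are independent mean-zero
random vectors in `ℝ^d` with `‖Vᵢ‖ ≤ b` almost surely, then for every `t ≥ 0`,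
`Pr[‖(1/n) ∑ Vᵢ‖ ≥ t] ≤ 2 exp(−n t² / (16 b²))`. -/
theorem vector_hoeffding {α : Type*} [MeasurableSpace α] (μ : Measure α)
    [IsProbabilityMeasure μ] (d n : ℕ) (V : Fin n → α → Euc d) (b : ℝ)
    (hmeas : ∀ i, Measurable (V i))
    (hindep : iIndepFun V μ)
    (hmean : ∀ i, (∫ a, V i a ∂μ) = 0)
    (hbdd : ∀ i, ∀ᵐ a ∂μ, ‖V i a‖ ≤ b)
    (t : ℝ) (ht : 0 ≤ t) :
    μ {a | t ≤ ‖(1 / (n : ℝ)) • ∑ i, V i a‖} ≤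
      ENNReal.ofReal (2 * Real.exp (-(n * t ^ 2) / (16 * b ^ 2))) := by
  have hsub : {a | t ≤ ‖(1 / (n : ℝ)) • ∑ i, V i a‖} ⊆ {a | n * t ≤ ‖∑ i, V i a‖} := by
    intro a ha
    rcases n.eq_zero_or_pos with rfl | hn
    · simp
    · have hn' : (0 : ℝ) < n := Nat.cast_pos.2 hn
      rwa [Set.mem_ofPred_eq, norm_smul, one_div, norm_inv, RCLike.norm_natCast,
        ← div_eq_inv_mul, le_div_iff₀ hn', mul_comm] at ha
  have hexponent : -(n * t) ^ 2 / (2 * n * b ^ 2) ≤ -(n * t ^ 2) / (16 * b ^ 2) := by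
    rcases eq_or_ne (n * b) 0 with hnb | hnb
    · rcases mul_eq_zero.1 hnb with h | h <;> simp [h]
    · obtain ⟨hn, hb⟩ := mul_ne_zero_iff.1 hnb
      rw [show -(n * t) ^ 2 / (2 * n * b ^ 2) = -(n * t ^ 2 / (2 * b ^ 2)) by field_simp,
        neg_div]
      gcongr
      linarith [sq_nonneg b]
  calc μ {a | t ≤ ‖(1 / (n : ℝ)) • ∑ i, V i a‖}
      ≤ ENNReal.ofReal (μ.real {a | n * t ≤ ‖∑ i, V i a‖}) := by
        rw [ofReal_measureReal]; exact measure_mono hsub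
    _ ≤ ENNReal.ofReal (2 * Real.exp (-(n * t ^ 2) / (16 * b ^ 2))) := by
        refine ENNReal.ofReal_le_ofReal ?_
        refine (measureReal_norm_sum_ge_le_of_iIndepFun hmeas hindep hmean hbdd
          (by positivity)).trans ?_
        rw [Fintype.card_fin]
        gcongr
end
end
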